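/- Let ρ ∈ [−1,1] and let (G₁,G₁') and (G₂,G₂') be independent pairs, each a pair of jointly Gaussian standard real random variables with correlation ρ (i.e. G_i' = ρG_i + √(1−ρ²)H_i with G₁, G₂, H₁, H₂ independent standard real Gaussians). Then E[sign(G₁² − G₂²)(G₁'² − G₂'²)] = (4/π)ρ². -/

import Mathlib

open MeasureTheory ProbabilityTheory Real Set Filter
open scoped ENNReal NNReal

lemma sign_mul_self_eq_abs (t : ℝ) : Real.sign t * t = |t| := by
  rcases lt_trichotomy t 0 with h | rfl | h
  · rw [Real.sign_of_neg h, abs_of_neg h]; ring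
  · simp
  · rw [Real.sign_of_pos h, abs_of_pos h]; ring

lemma abs_sign_le_one (t : ℝ) : |Real.sign t| ≤ 1 := by
  rcases Real.sign_apply_eq t with h | h | h <;> rw [h] <;> norm_num

lemma measurable_realSign : Measurable Real.sign := by
  have : Real.sign = fun r : ℝ => if r < 0 then (-1 : ℝ) else if 0 < r then 1 else 0 := by
    ext r; rw [Real.sign]
  rw [this]
  exact Measurable.ite (measurableSet_lt measurable_id measurable_const) measurable_const
    (Measurable.ite (measurableSet_lt measurable_const measurable_id) measurable_const
      measurable_const)

noncomputable def gPdf (x : ℝ) : ℝ := (Real.sqrt (2 * π))⁻¹ * Real.exp (-x ^ 2 / 2)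

lemma gPdf_nonneg (x : ℝ) : 0 ≤ gPdf x := by unfold gPdf; positivity

lemma gPdf_eq : gaussianPDFReal 0 1 = gPdf := by
  ext x; simp [gaussianPDFReal, gPdf]

lemma measurable_gPdf : Measurable gPdf := by
  rw [← gPdf_eq]; exact measurable_gaussianPDFReal 0 1

lemma gauss_withDensity :
    gaussianReal 0 1 = volume.withDensity (fun x => (Real.toNNReal (gPdf x) : ℝ≥0∞)) := by
  rw [gaussianReal_of_var_ne_zero 0 one_ne_zero, gaussianPDF_def, gPdf_eq]
  rfl

lemma integral_gauss (g : ℝ → ℝ) :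
    ∫ x, g x ∂(gaussianReal 0 1) = ∫ x, gPdf x * g x := by
  rw [gauss_withDensity, integral_withDensity_eq_integral_smul measurable_gPdf.real_toNNReal]
  congr 1; ext x
  simp [NNReal.smul_def, Real.coe_toNNReal _ (gPdf_nonneg x)]

lemma integrable_gauss_iff {g : ℝ → ℝ} :
    Integrable g (gaussianReal 0 1) ↔ Integrable (fun x => g x * gPdf x) volume := by
  rw [gauss_withDensity, integrable_withDensity_iff measurable_gPdf.real_toNNReal.coe_nnreal_ennreal
    (ae_of_all _ fun x => ENNReal.coe_lt_top)]
  constructor <;> intro h <;> refine h.congr (ae_of_all _ fun x => ?_) <;>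
    simp [Real.coe_toNNReal _ (gPdf_nonneg x)]

lemma integrable_pow_gauss (n : ℕ) : Integrable (fun x => x ^ n) (gaussianReal 0 1) := by
  rw [integrable_gauss_iff]
  have base : Integrable (fun x : ℝ => x ^ (n : ℝ) * Real.exp (-(2⁻¹ : ℝ) * x ^ 2)) :=
    integrable_rpow_mul_exp_neg_mul_sq (b := 2⁻¹) (s := (n : ℝ)) (by norm_num)
      (lt_of_lt_of_le (by norm_num) (Nat.cast_nonneg n))
  have base' : Integrable (fun x : ℝ => x ^ n * Real.exp (-(2⁻¹ : ℝ) * x ^ 2)) := by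
    simpa [Real.rpow_natCast] using base
  refine ((base'.abs.const_mul (Real.sqrt (2 * π))⁻¹).mono'
    ((measurable_id.pow_const n).mul measurable_gPdf).aestronglyMeasurable
    (ae_of_all _ fun x => ?_))
  have h2 : (-(2⁻¹ : ℝ) * x ^ 2) = -x ^ 2 / 2 := by ring
  rw [Real.norm_eq_abs, abs_mul, abs_of_nonneg (gPdf_nonneg x), abs_mul,
    abs_of_pos (Real.exp_pos _), h2]
  unfold gPdf
  exact le_of_eq (by ring)

lemma integrable_poly_exp (n : ℕ) :
    Integrable (fun x : ℝ => x ^ n * Real.exp (-x ^ 2 / 2)) := by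
  have base : Integrable (fun x : ℝ => x ^ (n : ℝ) * Real.exp (-(2⁻¹ : ℝ) * x ^ 2)) :=
    integrable_rpow_mul_exp_neg_mul_sq (b := 2⁻¹) (s := (n : ℝ)) (by norm_num)
      (lt_of_lt_of_le (by norm_num) (Nat.cast_nonneg n))
  have : ∀ x : ℝ, (-(2⁻¹ : ℝ) * x ^ 2) = -x ^ 2 / 2 := fun x => by ring
  simpa [Real.rpow_natCast, this] using base

lemma tendsto_exp_sq_atTop : Tendsto (fun x : ℝ => Real.exp (-x ^ 2 / 2)) atTop (nhds 0) := by
  have h : Tendsto (fun x : ℝ => -x ^ 2 / 2) atTop atBot := by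
    apply Tendsto.atBot_div_const (by norm_num)
    exact tendsto_neg_atTop_atBot.comp (tendsto_pow_atTop two_ne_zero)
  exact Real.tendsto_exp_atBot.comp h

lemma tendsto_poly_exp_atTop (n : ℕ) :
    Tendsto (fun x : ℝ => x ^ n * Real.exp (-x ^ 2 / 2)) atTop (nhds 0) := by
  have h := rpow_mul_exp_neg_mul_sq_isLittleO_exp_neg (b := 2⁻¹) (by norm_num) (n : ℝ)
  have hlin : Tendsto (fun x : ℝ => -(1 / 2 : ℝ) * x) atTop atBot := by
    have h0 : Tendsto (fun x : ℝ => (1 / 2 : ℝ) * x) atTop atTop :=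
      Tendsto.const_mul_atTop (by norm_num) tendsto_id
    exact (tendsto_neg_atTop_atBot.comp h0).congr fun x => (neg_mul _ _).symm
  have h2 : Tendsto (fun x : ℝ => Real.exp (-(1 / 2 : ℝ) * x)) atTop (nhds 0) :=
    Real.tendsto_exp_atBot.comp hlin
  have h3 := h.isBigO.trans_tendsto h2
  have heq : ∀ x : ℝ, -x ^ 2 / 2 = -(2⁻¹ * x ^ 2 : ℝ) := fun x => by ring
  simpa [Real.rpow_natCast, heq] using h3

lemma tendsto_poly_exp_atBot (n : ℕ) :
    Tendsto (fun x : ℝ => x ^ n * Real.exp (-x ^ 2 / 2)) atBot (nhds 0) := by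
  have h := (tendsto_poly_exp_atTop n).comp tendsto_neg_atBot_atTop
  have h2 := h.const_mul ((-1 : ℝ) ^ n)
  rw [mul_zero] at h2
  refine h2.congr fun x => ?_
  simp only [Function.comp]
  rw [neg_pow, neg_sq]
  ring_nf
  rw [mul_comm n 2, pow_mul, neg_one_sq, one_pow, mul_one]

lemma hasDerivAt_exp_sq (x : ℝ) :
    HasDerivAt (fun y : ℝ => Real.exp (-y ^ 2 / 2)) (-x * Real.exp (-x ^ 2 / 2)) x := by
  have h1 : HasDerivAt (fun y : ℝ => -y ^ 2 / 2) (-x) x := by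
    have := (hasDerivAt_pow 2 x).neg.div_const 2
    refine this.congr_deriv ?_
    simp; ring
  have := h1.exp
  convert this using 1
  ring

lemma integral_x_exp : ∫ x : ℝ, x * Real.exp (-x ^ 2 / 2) = 0 := by
  have hd : ∀ x : ℝ, HasDerivAt (fun y : ℝ => -Real.exp (-y ^ 2 / 2))
      (x * Real.exp (-x ^ 2 / 2)) x := by
    intro x
    have := (hasDerivAt_exp_sq x).neg
    refine this.congr_deriv ?_
    ring
  have hint : Integrable (fun x : ℝ => x * Real.exp (-x ^ 2 / 2)) := by
    simpa [pow_one] using integrable_poly_exp 1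
  have ht : Tendsto (fun x : ℝ => -Real.exp (-x ^ 2 / 2)) atTop (nhds 0) := by
    have := (tendsto_poly_exp_atTop 0).neg
    simpa using this
  have hb : Tendsto (fun x : ℝ => -Real.exp (-x ^ 2 / 2)) atBot (nhds 0) := by
    have := (tendsto_poly_exp_atBot 0).neg
    simpa using this
  have := integral_of_hasDerivAt_of_tendsto hd hint hb ht
  simpa using this

lemma integral_exp_sq : ∫ x : ℝ, Real.exp (-x ^ 2 / 2) = Real.sqrt (2 * π) := by
  have h := integral_gaussian (1 / 2)
  have heq : ∀ x : ℝ, -(1 / 2 : ℝ) * x ^ 2 = -x ^ 2 / 2 := fun x => by ring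
  simp_rw [heq] at h
  rw [h]
  congr 1
  rw [div_eq_mul_inv]
  norm_num
  ring

lemma integral_sq_exp : ∫ x : ℝ, x ^ 2 * Real.exp (-x ^ 2 / 2) = Real.sqrt (2 * π) := by
  have hd : ∀ x : ℝ, HasDerivAt (fun y : ℝ => -(y * Real.exp (-y ^ 2 / 2)))
      (x ^ 2 * Real.exp (-x ^ 2 / 2) - Real.exp (-x ^ 2 / 2)) x := by
    intro x
    have := ((hasDerivAt_id x).mul (hasDerivAt_exp_sq x)).neg
    refine this.congr_deriv ?_
    simp
    ring
  have h0 : Integrable (fun x : ℝ => Real.exp (-x ^ 2 / 2)) := by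
    simpa using integrable_poly_exp 0
  have hint : Integrable
      (fun x : ℝ => x ^ 2 * Real.exp (-x ^ 2 / 2) - Real.exp (-x ^ 2 / 2)) :=
    (integrable_poly_exp 2).sub h0
  have ht : Tendsto (fun x : ℝ => -(x * Real.exp (-x ^ 2 / 2))) atTop (nhds 0) := by
    have := (tendsto_poly_exp_atTop 1).neg
    simpa [pow_one] using this
  have hb : Tendsto (fun x : ℝ => -(x * Real.exp (-x ^ 2 / 2))) atBot (nhds 0) := by
    have := (tendsto_poly_exp_atBot 1).neg
    simpa [pow_one] using this
  have key := integral_of_hasDerivAt_of_tendsto hd hint hb ht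
  rw [integral_sub (integrable_poly_exp 2) h0, integral_exp_sq, sub_zero] at key
  linarith [key]

lemma sqrt_two_pi_pos : (0 : ℝ) < Real.sqrt (2 * π) := by positivity

lemma integral_id_gauss : ∫ x, x ∂(gaussianReal 0 1) = 0 := by
  rw [integral_gauss]
  have : ∀ x : ℝ, gPdf x * x = (Real.sqrt (2 * π))⁻¹ * (x * Real.exp (-x ^ 2 / 2)) := by
    intro x; unfold gPdf; ring
  simp_rw [this]
  rw [integral_const_mul, integral_x_exp, mul_zero]

lemma integral_sq_gauss : ∫ x, x ^ 2 ∂(gaussianReal 0 1) = 1 := by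
  rw [integral_gauss]
  have : ∀ x : ℝ, gPdf x * x ^ 2 = (Real.sqrt (2 * π))⁻¹ * (x ^ 2 * Real.exp (-x ^ 2 / 2)) := by
    intro x; unfold gPdf; ring
  simp_rw [this]
  rw [integral_const_mul, integral_sq_exp, inv_mul_cancel₀ sqrt_two_pi_pos.ne']

lemma integrable_quad (u v w : ℝ) :
    Integrable (fun x => u * x ^ 2 + v * x + w) (gaussianReal 0 1) := by
  have h2 := (integrable_pow_gauss 2).const_mul u
  have h1 := (integrable_pow_gauss 1).const_mul v
  have h0 : Integrable (fun _ : ℝ => w) (gaussianReal 0 1) := integrable_const w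
  simpa [pow_one, Pi.add_def] using (h2.add h1).add h0

lemma integral_quad (u v w : ℝ) :
    ∫ x, (u * x ^ 2 + v * x + w) ∂(gaussianReal 0 1) = u + w := by
  have h2 := (integrable_pow_gauss 2).const_mul u
  have h1 : Integrable (fun x : ℝ => v * x) (gaussianReal 0 1) := by
    simpa [pow_one] using (integrable_pow_gauss 1).const_mul v
  have h12 : Integrable (fun x : ℝ => u * x ^ 2 + v * x) (gaussianReal 0 1) := h2.add h1
  rw [integral_add h12 (integrable_const w), integral_add h2 h1, integral_const]
  simp only [integral_const_mul, integral_sq_gauss, measure_univ, ENNReal.toReal_one, one_smul]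
  have : ∫ x, v * x ∂(gaussianReal 0 1) = 0 := by
    rw [integral_const_mul]
    simp [integral_id_gauss]
  rw [this]
  simp [mul_one]

lemma integrable_poly_gPdf (n : ℕ) : Integrable (fun x : ℝ => x ^ n * gPdf x) := by
  have := (integrable_poly_exp n).const_mul (Real.sqrt (2 * π))⁻¹
  refine this.congr (ae_of_all _ fun x => ?_)
  unfold gPdf; ring

lemma integrable_gPdf : Integrable gPdf := by
  simpa using integrable_poly_gPdf 0

-- interval integral of |cos|
lemma abs_cos_periodic : Function.Periodic (fun x : ℝ => |Real.cos x|) π := by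
  intro x
  simp [Real.cos_add_pi]

lemma intervalIntegrable_abs_cos (a b : ℝ) :
    IntervalIntegrable (fun x : ℝ => |Real.cos x|) volume a b :=
  (continuous_abs.comp Real.continuous_cos).intervalIntegrable a b

lemma integral_abs_cos_zero_pi : ∫ x in (0 : ℝ)..π, |Real.cos x| = 2 := by
  have hsplit := intervalIntegral.integral_add_adjacent_intervals
    (intervalIntegrable_abs_cos 0 (π / 2)) (intervalIntegrable_abs_cos (π / 2) π)
  have h1 : ∫ x in (0 : ℝ)..(π / 2), |Real.cos x| = 1 := by
    rw [intervalIntegral.integral_congr (g := Real.cos) ?_]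
    · rw [integral_cos]; simp
    · intro x hx
      rw [uIcc_of_le (by positivity)] at hx
      exact abs_of_nonneg (Real.cos_nonneg_of_mem_Icc
        ⟨le_trans (by linarith [Real.pi_pos]) hx.1, hx.2⟩)
  have h2 : ∫ x in (π / 2 : ℝ)..π, |Real.cos x| = 1 := by
    rw [intervalIntegral.integral_congr (g := fun x => -Real.cos x) ?_]
    · rw [intervalIntegral.integral_neg, integral_cos]; simp
    · intro x hx
      rw [uIcc_of_le (by linarith [Real.pi_pos])] at hx
      exact abs_of_nonpos (Real.cos_nonpos_of_pi_div_two_le_of_le hx.1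
        (by linarith [hx.2, Real.pi_pos]))
  rw [← hsplit, h1, h2]; norm_num

lemma integral_abs_cos_big : ∫ x in (-(2 * π) : ℝ)..(2 * π), |Real.cos x| = 8 := by
  have key := abs_cos_periodic.intervalIntegral_add_zsmul_eq 4 (-(2 * π))
    intervalIntegrable_abs_cos
  have h1 : (-(2 * π) : ℝ) + (4 : ℤ) • π = 2 * π := by rw [zsmul_eq_mul]; push_cast; ring
  have h2 := abs_cos_periodic.intervalIntegral_add_eq (-(2 * π)) 0
  rw [h1] at key
  rw [key, h2]
  simp only [zero_add]
  rw [integral_abs_cos_zero_pi]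
  norm_num

lemma integral_abs_cos_Ioo :
    ∫ θ in Ioo (-π) π, |Real.cos (2 * θ)| = 4 := by
  rw [← integral_Ioc_eq_integral_Ioo,
    ← intervalIntegral.integral_of_le (by linarith [Real.pi_pos] : (-π : ℝ) ≤ π)]
  have := intervalIntegral.integral_comp_mul_left (a := (-π : ℝ)) (b := π)
    (c := (2 : ℝ)) (f := fun u => |Real.cos u|) two_ne_zero
  rw [this]
  have h : (2 : ℝ) * -π = -(2 * π) := by ring
  rw [h, integral_abs_cos_big]
  norm_num

lemma integral_r3 : ∫ r in Ioi (0 : ℝ), r ^ 3 * Real.exp (-r ^ 2 / 2) = 2 := by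
  have hd : ∀ x ∈ Ici (0 : ℝ), HasDerivAt (fun r : ℝ => -((r ^ 2 + 2) * Real.exp (-r ^ 2 / 2)))
      (x ^ 3 * Real.exp (-x ^ 2 / 2)) x := by
    intro x _
    have := (((hasDerivAt_pow 2 x).add_const 2).mul (hasDerivAt_exp_sq x)).neg
    refine this.congr_deriv ?_
    simp
    ring
  have hint : IntegrableOn (fun r : ℝ => r ^ 3 * Real.exp (-r ^ 2 / 2)) (Ioi 0) :=
    (integrable_poly_exp 3).integrableOn
  have ht : Tendsto (fun r : ℝ => -((r ^ 2 + 2) * Real.exp (-r ^ 2 / 2))) atTop (nhds 0) := by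
    have := ((tendsto_poly_exp_atTop 2).add ((tendsto_poly_exp_atTop 0).const_mul 2)).neg
    have h0 : -((0 : ℝ) + 2 * 0) = 0 := by norm_num
    rw [h0] at this
    refine this.congr fun x => ?_
    simp [pow_zero]
    ring
  have := integral_Ioi_of_hasDerivAt_of_tendsto' hd hint ht
  rw [this]
  norm_num

lemma integral_J :
    ∫ a, (∫ c, |a ^ 2 - c ^ 2| ∂(gaussianReal 0 1)) ∂(gaussianReal 0 1) = 4 / π := by
  have step1 : ∀ a : ℝ, (∫ c, |a ^ 2 - c ^ 2| ∂(gaussianReal 0 1))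
      = ∫ c, gPdf c * |a ^ 2 - c ^ 2| := fun a => integral_gauss _
  simp_rw [step1]
  rw [integral_gauss]
  have step2 : ∀ a : ℝ, gPdf a * ∫ c, gPdf c * |a ^ 2 - c ^ 2|
      = ∫ c, gPdf a * gPdf c * |a ^ 2 - c ^ 2| := by
    intro a
    rw [← integral_const_mul]
    congr 1; ext c; ring
  simp_rw [step2]
  have hH : Integrable (fun p : ℝ × ℝ => gPdf p.1 * gPdf p.2 * |p.1 ^ 2 - p.2 ^ 2|)
      (volume.prod volume) := by
    have hb : Integrable (fun p : ℝ × ℝ =>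
        (p.1 ^ 2 * gPdf p.1) * gPdf p.2 + gPdf p.1 * (p.2 ^ 2 * gPdf p.2)) (volume.prod volume) :=
      ((integrable_poly_gPdf 2).mul_prod integrable_gPdf).add
        (integrable_gPdf.mul_prod (integrable_poly_gPdf 2))
    refine hb.mono' ?_ (ae_of_all _ fun p => ?_)
    · exact (((measurable_gPdf.comp measurable_fst).mul
        (measurable_gPdf.comp measurable_snd)).mul
        (((measurable_fst.pow_const 2).sub (measurable_snd.pow_const 2)).abs)).aestronglyMeasurable
    · rw [Real.norm_eq_abs, abs_mul, abs_mul, abs_of_nonneg (gPdf_nonneg _),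
        abs_of_nonneg (gPdf_nonneg _)]
      rw [abs_abs]
      have h1 : |p.1 ^ 2 - p.2 ^ 2| ≤ p.1 ^ 2 + p.2 ^ 2 := by
        cases abs_cases (p.1 ^ 2 - p.2 ^ 2) <;> nlinarith [sq_nonneg p.1, sq_nonneg p.2]
      have h2 : (0 : ℝ) ≤ gPdf p.1 * gPdf p.2 := mul_nonneg (gPdf_nonneg _) (gPdf_nonneg _)
      calc gPdf p.1 * gPdf p.2 * |p.1 ^ 2 - p.2 ^ 2|
          ≤ gPdf p.1 * gPdf p.2 * (p.1 ^ 2 + p.2 ^ 2) := mul_le_mul_of_nonneg_left h1 h2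
        _ = p.1 ^ 2 * gPdf p.1 * gPdf p.2 + gPdf p.1 * (p.2 ^ 2 * gPdf p.2) := by ring
  rw [integral_integral hH, ← Measure.volume_eq_prod, ← integral_comp_polarCoord_symm]
  have htgt : polarCoord.target = Ioi (0 : ℝ) ×ˢ Ioo (-π) π := rfl
  rw [htgt]
  have hset : MeasurableSet (Ioi (0 : ℝ) ×ˢ Ioo (-π) π) :=
    measurableSet_Ioi.prod measurableSet_Ioo
  rw [setIntegral_congr_fun hset
    (g := fun p : ℝ × ℝ => ((2 * π)⁻¹ * (p.1 ^ 3 * Real.exp (-p.1 ^ 2 / 2))) * |Real.cos (2 * p.2)|)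
    ?_]
  · rw [Measure.volume_eq_prod]
    have hprod := setIntegral_prod_mul (μ := (volume : Measure ℝ)) (ν := (volume : Measure ℝ))
      (fun r : ℝ => (2 * π)⁻¹ * (r ^ 3 * Real.exp (-r ^ 2 / 2)))
      (fun θ : ℝ => |Real.cos (2 * θ)|) (Ioi 0) (Ioo (-π) π)
    refine hprod.trans ?_
    rw [integral_abs_cos_Ioo, integral_const_mul, integral_r3]
    rw [mul_inv]
    field_simp
  · intro p hp
    have hsymm : polarCoord.symm p = (p.1 * Real.cos p.2, p.1 * Real.sin p.2) := rfl
    dsimp only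
    rw [smul_eq_mul, hsymm]
    simp only
    have hexp : Real.exp (-(p.1 * Real.cos p.2) ^ 2 / 2) * Real.exp (-(p.1 * Real.sin p.2) ^ 2 / 2)
        = Real.exp (-p.1 ^ 2 / 2) := by
      rw [← Real.exp_add]
      congr 1
      have h := Real.sin_sq_add_cos_sq p.2
      nlinarith [h]
    have habs : |(p.1 * Real.cos p.2) ^ 2 - (p.1 * Real.sin p.2) ^ 2|
        = p.1 ^ 2 * |Real.cos (2 * p.2)| := by
      rw [mul_pow, mul_pow, ← mul_sub, abs_mul, abs_of_nonneg (sq_nonneg _)]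
      congr 1
      rw [Real.cos_two_mul']
    have hc : (Real.sqrt (2 * π))⁻¹ * (Real.sqrt (2 * π))⁻¹ = (2 * π)⁻¹ := by
      rw [← mul_inv, Real.mul_self_sqrt (by positivity)]
    have expand : p.1 * (gPdf (p.1 * Real.cos p.2) * gPdf (p.1 * Real.sin p.2)
          * |(p.1 * Real.cos p.2) ^ 2 - (p.1 * Real.sin p.2) ^ 2|)
        = ((Real.sqrt (2 * π))⁻¹ * (Real.sqrt (2 * π))⁻¹)
          * (Real.exp (-(p.1 * Real.cos p.2) ^ 2 / 2) * Real.exp (-(p.1 * Real.sin p.2) ^ 2 / 2))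
          * (p.1 * |(p.1 * Real.cos p.2) ^ 2 - (p.1 * Real.sin p.2) ^ 2|) := by
      unfold gPdf; ring
    rw [expand, hexp, habs, hc]
    ring

lemma integrable_affine_sq (u w : ℝ) :
    Integrable (fun x : ℝ => (u + w * x) ^ 2) (gaussianReal 0 1) :=
  (integrable_quad (w ^ 2) (2 * u * w) (u ^ 2)).congr (ae_of_all _ fun x => by ring)

lemma integral_affine_sq (u w : ℝ) :
    ∫ x, (u + w * x) ^ 2 ∂(gaussianReal 0 1) = u ^ 2 + w ^ 2 := by
  have h : (fun x : ℝ => (u + w * x) ^ 2)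
      = fun x => w ^ 2 * x ^ 2 + (2 * u * w) * x + u ^ 2 := funext fun x => by ring
  rw [h, integral_quad]
  ring

lemma integrable_sign_sub_quad (a K u w : ℝ) :
    Integrable (fun c : ℝ => Real.sign (a ^ 2 - c ^ 2) * (K - ((u * c) ^ 2 + w)))
      (gaussianReal 0 1) := by
  have hb : Integrable (fun c : ℝ => u ^ 2 * c ^ 2 + 0 * c + (|K| + |w|)) (gaussianReal 0 1) :=
    integrable_quad _ _ _
  refine hb.mono' ?_ (ae_of_all _ fun c => ?_)
  · exact ((measurable_realSign.comp (measurable_const.sub (measurable_id.pow_const 2))).mul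
      (measurable_const.sub (((measurable_const.mul measurable_id).pow_const 2).add
        measurable_const))).aestronglyMeasurable
  · rw [Real.norm_eq_abs, abs_mul]
    have h1 := abs_sign_le_one (a ^ 2 - c ^ 2)
    have h2 : |K - ((u * c) ^ 2 + w)| ≤ |K| + ((u * c) ^ 2 + |w|) := by
      cases abs_cases (K - ((u * c) ^ 2 + w)) <;> cases abs_cases K <;> cases abs_cases w <;>
        nlinarith [sq_nonneg (u * c)]
    have h3 : |Real.sign (a ^ 2 - c ^ 2)| * |K - ((u * c) ^ 2 + w)|
        ≤ |K - ((u * c) ^ 2 + w)| := mul_le_of_le_one_left (abs_nonneg _) h1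
    calc |Real.sign (a ^ 2 - c ^ 2)| * |K - ((u * c) ^ 2 + w)|
        ≤ |K| + ((u * c) ^ 2 + |w|) := h3.trans h2
      _ = u ^ 2 * c ^ 2 + 0 * c + (|K| + |w|) := by ring
/-- The scalar identity behind the `κ = π/4` normalisation: with two
independent centered Gaussian pairs `(Gᵢ, Gᵢ')`, each with unit variances and
correlation `ρ` (realised as `Gᵢ' = ρ Gᵢ + √(1−ρ²) Hᵢ` for independent standard
Gaussians `Gᵢ, Hᵢ`), one has `E[sign(G₁² − G₂²)(G₁'² − G₂'²)] = (4/π)ρ²`. -/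
theorem sign_product_scalar_identity (ρ : ℝ) (hρ : ρ ∈ Set.Icc (-1 : ℝ) 1) :
    ∫ p : (ℝ × ℝ) × (ℝ × ℝ),
        (Real.sign (p.1.1 ^ 2 - p.2.1 ^ 2) *
          ((ρ * p.1.1 + Real.sqrt (1 - ρ ^ 2) * p.1.2) ^ 2
            - (ρ * p.2.1 + Real.sqrt (1 - ρ ^ 2) * p.2.2) ^ 2))
      ∂(((gaussianReal 0 1).prod (gaussianReal 0 1)).prod
          ((gaussianReal 0 1).prod (gaussianReal 0 1)))
      = (4 / Real.pi) * ρ ^ 2 := by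
  obtain ⟨hρ1, hρ2⟩ := hρ
  set v : Measure ℝ := gaussianReal 0 1 with hvdef
  set s : ℝ := Real.sqrt (1 - ρ ^ 2) with hsdef
  have hs2 : s ^ 2 = 1 - ρ ^ 2 := Real.sq_sqrt (by nlinarith)
  have hone2 : Integrable (fun _ : ℝ × ℝ => (1 : ℝ)) (v.prod v) := integrable_const 1
  have hone1 : Integrable (fun _ : ℝ => (1 : ℝ)) v := integrable_const 1
  have hq : Integrable (fun z : ℝ × ℝ => (ρ * z.1 + s * z.2) ^ 2) (v.prod v) := by
    have h1 := ((integrable_pow_gauss 2).mul_prod (integrable_pow_gauss 0)).const_mul (ρ ^ 2)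
    have h2 := ((integrable_pow_gauss 1).mul_prod (integrable_pow_gauss 1)).const_mul (2 * ρ * s)
    have h3 := ((integrable_pow_gauss 0).mul_prod (integrable_pow_gauss 2)).const_mul (s ^ 2)
    refine ((h1.add h2).add h3).congr (ae_of_all _ fun z => ?_)
    simp only [Pi.add_apply, pow_zero, pow_one, mul_one, one_mul]
    ring
  have hqm : Measurable (fun z : ℝ × ℝ => (ρ * z.1 + s * z.2) ^ 2) :=
    ((measurable_const.mul measurable_fst).add (measurable_const.mul measurable_snd)).pow_const 2
  have hFm : Measurable (fun p : (ℝ × ℝ) × (ℝ × ℝ) =>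
      Real.sign (p.1.1 ^ 2 - p.2.1 ^ 2) *
        ((ρ * p.1.1 + s * p.1.2) ^ 2 - (ρ * p.2.1 + s * p.2.2) ^ 2)) := by
    refine Measurable.mul ?_ ?_
    · exact measurable_realSign.comp
        ((measurable_fst.fst.pow_const 2).sub (measurable_snd.fst.pow_const 2))
    · exact (hqm.comp measurable_fst).sub (hqm.comp measurable_snd)
  have hF : Integrable (fun p : (ℝ × ℝ) × (ℝ × ℝ) =>
      Real.sign (p.1.1 ^ 2 - p.2.1 ^ 2) *
        ((ρ * p.1.1 + s * p.1.2) ^ 2 - (ρ * p.2.1 + s * p.2.2) ^ 2))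
      ((v.prod v).prod (v.prod v)) := by
    have hb := (hq.mul_prod hone2).add (hone2.mul_prod hq)
    refine hb.mono' hFm.aestronglyMeasurable (ae_of_all _ fun p => ?_)
    rw [Real.norm_eq_abs, abs_mul]
    have h1 : |(ρ * p.1.1 + s * p.1.2) ^ 2 - (ρ * p.2.1 + s * p.2.2) ^ 2|
        ≤ (ρ * p.1.1 + s * p.1.2) ^ 2 + (ρ * p.2.1 + s * p.2.2) ^ 2 := by
      cases abs_cases ((ρ * p.1.1 + s * p.1.2) ^ 2 - (ρ * p.2.1 + s * p.2.2) ^ 2) <;>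
        nlinarith [sq_nonneg (ρ * p.1.1 + s * p.1.2), sq_nonneg (ρ * p.2.1 + s * p.2.2)]
    have h3 := mul_le_of_le_one_left (abs_nonneg
      ((ρ * p.1.1 + s * p.1.2) ^ 2 - (ρ * p.2.1 + s * p.2.2) ^ 2))
      (abs_sign_le_one (p.1.1 ^ 2 - p.2.1 ^ 2))
    calc |Real.sign (p.1.1 ^ 2 - p.2.1 ^ 2)|
          * |(ρ * p.1.1 + s * p.1.2) ^ 2 - (ρ * p.2.1 + s * p.2.2) ^ 2|
        ≤ (ρ * p.1.1 + s * p.1.2) ^ 2 + (ρ * p.2.1 + s * p.2.2) ^ 2 := h3.trans h1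
      _ = (ρ * p.1.1 + s * p.1.2) ^ 2 * 1 + 1 * (ρ * p.2.1 + s * p.2.2) ^ 2 := by ring
  rw [MeasureTheory.integral_prod _ hF]
  have hFx : ∀ x : ℝ × ℝ, Integrable (fun y : ℝ × ℝ =>
      Real.sign (x.1 ^ 2 - y.1 ^ 2) *
        ((ρ * x.1 + s * x.2) ^ 2 - (ρ * y.1 + s * y.2) ^ 2)) (v.prod v) := by
    intro x
    have hb := (integrable_const (μ := v.prod v) ((ρ * x.1 + s * x.2) ^ 2)).add hq
    refine hb.mono' ?_ (ae_of_all _ fun y => ?_)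
    · exact ((measurable_realSign.comp
        (measurable_const.sub (measurable_fst.pow_const 2))).mul
        (measurable_const.sub hqm)).aestronglyMeasurable
    · rw [Real.norm_eq_abs, abs_mul]
      have h1 : |(ρ * x.1 + s * x.2) ^ 2 - (ρ * y.1 + s * y.2) ^ 2|
          ≤ (ρ * x.1 + s * x.2) ^ 2 + (ρ * y.1 + s * y.2) ^ 2 := by
        cases abs_cases ((ρ * x.1 + s * x.2) ^ 2 - (ρ * y.1 + s * y.2) ^ 2) <;>
          nlinarith [sq_nonneg (ρ * x.1 + s * x.2), sq_nonneg (ρ * y.1 + s * y.2)]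
      have h3 := mul_le_of_le_one_left (abs_nonneg
        ((ρ * x.1 + s * x.2) ^ 2 - (ρ * y.1 + s * y.2) ^ 2))
        (abs_sign_le_one (x.1 ^ 2 - y.1 ^ 2))
      exact (h3.trans h1)
  have e1 : ∀ x : ℝ × ℝ, (∫ y : ℝ × ℝ, Real.sign (x.1 ^ 2 - y.1 ^ 2) *
        ((ρ * x.1 + s * x.2) ^ 2 - (ρ * y.1 + s * y.2) ^ 2) ∂(v.prod v))
      = ∫ c, Real.sign (x.1 ^ 2 - c ^ 2) *
          ((ρ * x.1 + s * x.2) ^ 2 - ((ρ * c) ^ 2 + s ^ 2)) ∂v := by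
    intro x
    rw [MeasureTheory.integral_prod _ (hFx x)]
    refine integral_congr_ae (ae_of_all _ fun c => ?_)
    dsimp only
    rw [MeasureTheory.integral_const_mul]
    congr 1
    rw [integral_sub (integrable_const _) (integrable_affine_sq (ρ * c) s),
      MeasureTheory.integral_const, integral_affine_sq]
    simp [measure_univ]
  rw [integral_congr_ae (ae_of_all _ e1)]
  -- outer integrability of x ↦ inner integral
  have hG : Integrable (fun x : ℝ × ℝ => ∫ c, Real.sign (x.1 ^ 2 - c ^ 2) *
      ((ρ * x.1 + s * x.2) ^ 2 - ((ρ * c) ^ 2 + s ^ 2)) ∂v) (v.prod v) := by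
    have hΦm : Measurable (fun q : (ℝ × ℝ) × ℝ => Real.sign (q.1.1 ^ 2 - q.2 ^ 2) *
        ((ρ * q.1.1 + s * q.1.2) ^ 2 - ((ρ * q.2) ^ 2 + s ^ 2))) := by
      refine Measurable.mul ?_ ?_
      · exact measurable_realSign.comp
          ((measurable_fst.fst.pow_const 2).sub (measurable_snd.pow_const 2))
      · exact (((measurable_const.mul measurable_fst.fst).add
          (measurable_const.mul measurable_fst.snd)).pow_const 2).sub
          (((measurable_const.mul measurable_snd).pow_const 2).add measurable_const)
    have hGm := hΦm.stronglyMeasurable.integral_prod_right' (ν := v)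
    refine (hq.add (integrable_const (ρ ^ 2 + s ^ 2))).mono'
      hGm.aestronglyMeasurable (ae_of_all _ fun x => ?_)
    have hKnn : (0 : ℝ) ≤ (ρ * x.1 + s * x.2) ^ 2 := sq_nonneg _
    have hb1 : ∀ c : ℝ, ‖Real.sign (x.1 ^ 2 - c ^ 2) *
        ((ρ * x.1 + s * x.2) ^ 2 - ((ρ * c) ^ 2 + s ^ 2))‖
        ≤ (ρ * x.1 + s * x.2) ^ 2 + (ρ ^ 2 * c ^ 2 + 0 * c + s ^ 2) := by
      intro c
      rw [Real.norm_eq_abs, abs_mul]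
      have h3 := mul_le_of_le_one_left (abs_nonneg
        ((ρ * x.1 + s * x.2) ^ 2 - ((ρ * c) ^ 2 + s ^ 2)))
        (abs_sign_le_one (x.1 ^ 2 - c ^ 2))
      have h1 : |(ρ * x.1 + s * x.2) ^ 2 - ((ρ * c) ^ 2 + s ^ 2)|
          ≤ (ρ * x.1 + s * x.2) ^ 2 + (ρ ^ 2 * c ^ 2 + 0 * c + s ^ 2) := by
        have hsnn : (0:ℝ) ≤ s ^ 2 := sq_nonneg _
        cases abs_cases ((ρ * x.1 + s * x.2) ^ 2 - ((ρ * c) ^ 2 + s ^ 2)) <;>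
          nlinarith [sq_nonneg (ρ * c)]
      exact h3.trans h1
    have hint1 : Integrable (fun c : ℝ => Real.sign (x.1 ^ 2 - c ^ 2) *
        ((ρ * x.1 + s * x.2) ^ 2 - ((ρ * c) ^ 2 + s ^ 2))) v :=
      integrable_sign_sub_quad x.1 ((ρ * x.1 + s * x.2) ^ 2) ρ (s ^ 2)
    calc ‖∫ c, Real.sign (x.1 ^ 2 - c ^ 2) *
          ((ρ * x.1 + s * x.2) ^ 2 - ((ρ * c) ^ 2 + s ^ 2)) ∂v‖
        ≤ ∫ c, ‖Real.sign (x.1 ^ 2 - c ^ 2) *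
          ((ρ * x.1 + s * x.2) ^ 2 - ((ρ * c) ^ 2 + s ^ 2))‖ ∂v :=
          norm_integral_le_integral_norm _
      _ ≤ ∫ c, ((ρ * x.1 + s * x.2) ^ 2 + (ρ ^ 2 * c ^ 2 + 0 * c + s ^ 2)) ∂v :=
          integral_mono hint1.norm
            ((integrable_const _).add (integrable_quad _ _ _)) hb1
      _ = (ρ * x.1 + s * x.2) ^ 2 + (ρ ^ 2 + s ^ 2) := by
          rw [integral_add (integrable_const _) (integrable_quad _ _ _),
            MeasureTheory.integral_const, integral_quad]
          simp [measure_univ]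
      _ = ((fun z : ℝ × ℝ => (ρ * z.1 + s * z.2) ^ 2) + fun _ : ℝ × ℝ => ρ ^ 2 + s ^ 2) x := by
          simp only [Pi.add_apply]
  rw [MeasureTheory.integral_prod _ hG]
  -- swap inner two integrals and evaluate
  have e2 : ∀ a : ℝ, (∫ b : ℝ, (∫ c, Real.sign (a ^ 2 - c ^ 2) *
        ((ρ * a + s * b) ^ 2 - ((ρ * c) ^ 2 + s ^ 2)) ∂v) ∂v)
      = ∫ c, ρ ^ 2 * |a ^ 2 - c ^ 2| ∂v := by
    intro a
    have hφ : Integrable (Function.uncurry fun b c : ℝ => Real.sign (a ^ 2 - c ^ 2) *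
        ((ρ * a + s * b) ^ 2 - ((ρ * c) ^ 2 + s ^ 2))) (v.prod v) := by
      have hb := ((integrable_affine_sq (ρ * a) s).mul_prod hone1).add
        (hone1.mul_prod (integrable_quad (ρ ^ 2) 0 (s ^ 2)))
      refine hb.mono' ?_ (ae_of_all _ fun z => ?_)
      · refine Measurable.aestronglyMeasurable (Measurable.mul ?_ ?_)
        · exact measurable_realSign.comp
            (measurable_const.sub (measurable_snd.pow_const 2))
        · exact ((measurable_const.add (measurable_const.mul measurable_fst)).pow_const 2).sub
            (((measurable_const.mul measurable_snd).pow_const 2).add measurable_const)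
      · rw [Function.uncurry]
        rw [Real.norm_eq_abs, abs_mul]
        have h3 := mul_le_of_le_one_left (abs_nonneg
          ((ρ * a + s * z.1) ^ 2 - ((ρ * z.2) ^ 2 + s ^ 2)))
          (abs_sign_le_one (a ^ 2 - z.2 ^ 2))
        have h1 : |(ρ * a + s * z.1) ^ 2 - ((ρ * z.2) ^ 2 + s ^ 2)|
            ≤ (ρ * a + s * z.1) ^ 2 * 1 + 1 * (ρ ^ 2 * z.2 ^ 2 + 0 * z.2 + s ^ 2) := by
          have hsnn : (0:ℝ) ≤ s ^ 2 := sq_nonneg _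
          cases abs_cases ((ρ * a + s * z.1) ^ 2 - ((ρ * z.2) ^ 2 + s ^ 2)) <;>
            nlinarith [sq_nonneg (ρ * z.2), sq_nonneg (ρ * a + s * z.1)]
        exact h3.trans h1
    rw [MeasureTheory.integral_integral_swap hφ]
    refine integral_congr_ae (ae_of_all _ fun c => ?_)
    dsimp only
    rw [MeasureTheory.integral_const_mul]
    rw [integral_sub (integrable_affine_sq (ρ * a) s) (integrable_const _),
      integral_affine_sq, MeasureTheory.integral_const]
    simp only [measure_univ, ENNReal.toReal_one, one_smul, smul_eq_mul, one_mul, MeasureTheory.probReal_univ]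
    have hrw : (ρ * a) ^ 2 + s ^ 2 - ((ρ * c) ^ 2 + s ^ 2) = ρ ^ 2 * (a ^ 2 - c ^ 2) := by ring
    rw [hrw, show Real.sign (a ^ 2 - c ^ 2) * (ρ ^ 2 * (a ^ 2 - c ^ 2))
      = ρ ^ 2 * (Real.sign (a ^ 2 - c ^ 2) * (a ^ 2 - c ^ 2)) from by ring,
      sign_mul_self_eq_abs]
  rw [integral_congr_ae (ae_of_all _ e2)]
  simp_rw [MeasureTheory.integral_const_mul]
  rw [hvdef, integral_J]
  ring
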